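/- Pohozaev-type divergence identity: let n ≥ 1, s ∈ (0,1), a = 1 − 2s, and let v : ℝⁿ × (0,∞) → ℝ be a C² function satisfying div(y^{a} ∇v) = 0 on ℝⁿ × (0,∞) (equivalently y Δv + a ∂_y v = 0), where ∇, Δ and div are taken in all n+1 variables z = (x,y). Then for every z = (x,y) with y > 0, div( y^{a} (z·∇v(z)) ∇v(z) − (1/2) y^{a} |∇v(z)|² z ) + ((n − 2s)/2) y^{a} |∇v(z)|² = 0. -/

import Mathlib

noncomputable section

open Real MeasureTheory Filter Set

/-- Points of the upper half-space model: `(x, y)` with `x : ℝⁿ`, `y : ℝ`. -/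
abbrev Pt (n : ℕ) := (Fin n → ℝ) × ℝ

/-- The `k`-th horizontal coordinate direction. -/
def eX (n : ℕ) (k : Fin n) : Pt n := (Pi.single k 1, 0)

/-- The vertical coordinate direction. -/
def eY (n : ℕ) : Pt n := (0, 1)

/-- Directional (partial) derivative of `f` at `z` in direction `d`. -/
def pd (n : ℕ) (f : Pt n → ℝ) (d : Pt n) (z : Pt n) : ℝ := fderiv ℝ f z d

/-- Laplacian in all `n + 1` variables. -/
def lap (n : ℕ) (f : Pt n → ℝ) (z : Pt n) : ℝ :=
  (∑ k : Fin n, pd n (fun w => pd n f (eX n k) w) (eX n k) z) +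
    pd n (fun w => pd n f (eY n) w) (eY n) z

/-- Squared norm of the full gradient (in all `n + 1` variables). -/
def gradSq (n : ℕ) (f : Pt n → ℝ) (z : Pt n) : ℝ :=
  (∑ k : Fin n, (pd n f (eX n k) z) ^ 2) + (pd n f (eY n) z) ^ 2

/-- Squared norm of the horizontal gradient `∇ₓ f`. -/
def gradXSq (n : ℕ) (f : Pt n → ℝ) (z : Pt n) : ℝ :=
  ∑ k : Fin n, (pd n f (eX n k) z) ^ 2

/-- The full gradient as a vector in `Pt n`. -/
def gradVec (n : ℕ) (f : Pt n → ℝ) (z : Pt n) : Pt n :=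
  (fun k => pd n f (eX n k) z, pd n f (eY n) z)

/-- Euclidean inner product on `Pt n`. -/
def dotPt (n : ℕ) (z w : Pt n) : ℝ := (∑ k : Fin n, z.1 k * w.1 k) + z.2 * w.2

/-- Divergence (in all `n + 1` variables) of a vector field on `Pt n`. -/
def diverg (n : ℕ) (V : Pt n → Pt n) (z : Pt n) : ℝ :=
  (∑ k : Fin n, fderiv ℝ (fun w => (V w).1 k) z (eX n k)) +
    fderiv ℝ (fun w => (V w).2) z (eY n)

/-- Euclidean norm of `x : ℝⁿ`. -/
def radNorm (n : ℕ) (x : Fin n → ℝ) : ℝ := Real.sqrt (∑ k : Fin n, (x k) ^ 2)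

/-- The normalizing constant `d_s = Γ(1-s) / (2^(2s-1) Γ(s))`. -/
def dCoef (s : ℝ) : ℝ := Real.Gamma (1 - s) / ((2 : ℝ) ^ (2 * s - 1) * Real.Gamma s)

/-- First partial derivative `∂_{u_i} H`. -/
def H1 (m : ℕ) (H : (Fin m → ℝ) → ℝ) (i : Fin m) (u : Fin m → ℝ) : ℝ :=
  fderiv ℝ H u (Pi.single i 1)

/-- Second partial derivative `∂_{u_i u_j} H`. -/
def H2 (m : ℕ) (H : (Fin m → ℝ) → ℝ) (i j : Fin m) (u : Fin m → ℝ) : ℝ :=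
  fderiv ℝ (fun w => fderiv ℝ H w (Pi.single i 1)) u (Pi.single j 1)

/-- Open upper half-space `ℝⁿ × (0, ∞)`. -/
def upperHalf (n : ℕ) : Set (Pt n) := {z : Pt n | 0 < z.2}

/-- Closed upper half-space `ℝⁿ × [0, ∞)`. -/
def cUpperHalf (n : ℕ) : Set (Pt n) := {z : Pt n | 0 ≤ z.2}

/-- Half ball `B_R⁺ = {(x,y) : |x|² + y² < R², y > 0}`. -/
def BPlus (n : ℕ) (R : ℝ) : Set (Pt n) :=
  {z : Pt n | radNorm n z.1 ^ 2 + z.2 ^ 2 < R ^ 2 ∧ 0 < z.2}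

/-- Ball `B_R ⊂ ℝⁿ`. -/
def ballX (n : ℕ) (R : ℝ) : Set (Fin n → ℝ) := {x | radNorm n x < R}

/-- Cylinder `C_R = B_R × (0, R)`. -/
def CylR (n : ℕ) (R : ℝ) : Set (Pt n) :=
  {z : Pt n | radNorm n z.1 < R ∧ z.2 ∈ Set.Ioo (0 : ℝ) R}

/-- `v` is a classical solution of the extension system
`div(y^{a_i} ∇ v_i) = 0` in `ℝⁿ × (0,∞)`,
`-lim_{y→0⁺} y^{a_i} ∂_y v_i = d_{s_i} ∂_{u_i} H(v(·,0))` on `ℝⁿ`, with `a_i = 1 - 2 s_i`. -/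
structure ExtSol (n m : ℕ) (s : Fin m → ℝ) (H : (Fin m → ℝ) → ℝ)
    (v : Fin m → Pt n → ℝ) : Prop where
  s_mem : ∀ i, s i ∈ Set.Ioo (0 : ℝ) 1
  H_smooth : ContDiff ℝ 2 H
  cont : ∀ i, ContinuousOn (v i) (cUpperHalf n)
  smooth : ∀ i, ContDiffOn ℝ 2 (v i) (upperHalf n)
  interior : ∀ i, ∀ z : Pt n, 0 < z.2 →
    z.2 * lap n (v i) z + (1 - 2 * s i) * pd n (v i) (eY n) z = 0
  boundary : ∀ i, ∀ x : Fin n → ℝ,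
    Tendsto (fun y : ℝ => y ^ (1 - 2 * s i) * pd n (v i) (eY n) (x, y))
      (nhdsWithin 0 (Set.Ioi 0))
      (nhds (-(dCoef (s i) * H1 m H i (fun j => v j (x, 0)))))

/-- `v` is bounded on the closed half-space. -/
def BoundedSol (n m : ℕ) (v : Fin m → Pt n → ℝ) : Prop :=
  ∀ i, ∃ C : ℝ, ∀ z : Pt n, 0 ≤ z.2 → |v i z| ≤ C

/-- Pointwise stability of a solution `v` of the extension system. -/
def PointwiseStable (n m : ℕ) (s : Fin m → ℝ) (H : (Fin m → ℝ) → ℝ)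
    (v : Fin m → Pt n → ℝ) : Prop :=
  ∃ φ : Fin m → Pt n → ℝ,
    (∀ i, ContinuousOn (φ i) (cUpperHalf n)) ∧
    (∀ i, ContDiffOn ℝ 2 (φ i) (upperHalf n)) ∧
    (∀ i, (∀ z : Pt n, 0 ≤ z.2 → 0 < φ i z) ∨ (∀ z : Pt n, 0 ≤ z.2 → φ i z < 0)) ∧
    (∀ i, ∀ z : Pt n, 0 < z.2 →
      z.2 * lap n (φ i) z + (1 - 2 * s i) * pd n (φ i) (eY n) z = 0) ∧
    (∀ i, ∀ x : Fin n → ℝ,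
      Tendsto (fun y : ℝ => y ^ (1 - 2 * s i) * pd n (φ i) (eY n) (x, y))
        (nhdsWithin 0 (Set.Ioi 0))
        (nhds (-(dCoef (s i) *
          ∑ j, H2 m H i j (fun k => v k (x, 0)) * φ j (x, 0))))) ∧
    (∀ i j : Fin m, i < j → ∀ x : Fin n → ℝ,
      0 ≤ H2 m H i j (fun k => v k (x, 0)) * φ i (x, 0) * φ j (x, 0))

/-- The index of the last horizontal coordinate `x_n`. -/
def lastX (n : ℕ) (hn : 0 < n) : Fin n := ⟨n - 1, Nat.sub_lt hn Nat.one_pos⟩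

/-- `v` is `H`-monotone: each `v_i` is strictly monotone in `x_n` and the mixed
second derivatives of `H` have the compatible signs. -/
def HMonotone (n m : ℕ) (hn : 0 < n) (H : (Fin m → ℝ) → ℝ)
    (v : Fin m → Pt n → ℝ) : Prop :=
  (∀ i, (∀ z : Pt n, 0 ≤ z.2 → 0 < pd n (v i) (eX n (lastX n hn)) z) ∨
        (∀ z : Pt n, 0 ≤ z.2 → pd n (v i) (eX n (lastX n hn)) z < 0)) ∧
  (∀ i j : Fin m, i < j → ∀ x : Fin n → ℝ,
    0 ≤ H2 m H i j (fun k => v k (x, 0)) *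
        pd n (v i) (eX n (lastX n hn)) (x, 0) *
        pd n (v j) (eX n (lastX n hn)) (x, 0))

/-- Orientability of the system along `v`. -/
def Orientable (n m : ℕ) (H : (Fin m → ℝ) → ℝ) (v : Fin m → Pt n → ℝ) : Prop :=
  ∃ θ : Fin m → (Fin n → ℝ) → ℝ,
    (∀ k, Continuous (θ k)) ∧
    (∀ k, ∃ x, θ k x ≠ 0) ∧
    (∀ k, (∀ x, 0 ≤ θ k x) ∨ (∀ x, θ k x ≤ 0)) ∧
    (∀ i j : Fin m, i < j → ∀ x : Fin n → ℝ,
      0 ≤ H2 m H i j (fun l => v l (x, 0)) * θ i x * θ j x)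

/-- The stability inequality for `v`. -/
def StabIneq (n m : ℕ) (s : Fin m → ℝ) (H : (Fin m → ℝ) → ℝ)
    (v : Fin m → Pt n → ℝ) : Prop :=
  ∀ ζ : Fin m → Pt n → ℝ, (∀ i, ContDiff ℝ 1 (ζ i)) → (∀ i, HasCompactSupport (ζ i)) →
    (∑ i, ∑ j, ∫ x : Fin n → ℝ,
        Real.sqrt (dCoef (s i) * dCoef (s j)) * H2 m H i j (fun k => v k (x, 0)) *
          ζ i (x, 0) * ζ j (x, 0)) ≤
      ∑ i, ∫ z in upperHalf n, z.2 ^ (1 - 2 * s i) * gradSq n (ζ i) z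

/-- Layer solution of the extension system in dimension `n = 1`. -/
def LayerSol (m : ℕ) (s : Fin m → ℝ) (H : (Fin m → ℝ) → ℝ)
    (v : Fin m → Pt 1 → ℝ) (α β : Fin m → ℝ) : Prop :=
  ExtSol 1 m s H v ∧ BoundedSol 1 m v ∧
  (∀ i, (∀ z : Pt 1, 0 ≤ z.2 → 0 ≤ pd 1 (v i) (eX 1 0) z) ∨
        (∀ z : Pt 1, 0 ≤ z.2 → pd 1 (v i) (eX 1 0) z ≤ 0)) ∧
  (∀ i, ∀ y : ℝ, 0 ≤ y →
    Tendsto (fun t : ℝ => v i (fun _ => t, y)) atTop (nhds (α i))) ∧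
  (∀ i, ∀ y : ℝ, 0 ≤ y →
    Tendsto (fun t : ℝ => v i (fun _ => t, y)) atBot (nhds (β i)))

/-!
Write `A = y^a`, `D = z · ∇v`, `G = |∇v|²`, `V = A D ∇v - ½ A G z`, and let `F` be the
Hessian of `v`. By the product rule `div (A D ∇v) = ∇(A D) · ∇v + A D Δv` and
`div (½ A G z) = ½ ∇(A G) · z + (n + 1)/2 · A G`. Since `∇A = a y^(a-1) e_y`, `∇D = ∇v + F z`
and `∇G = 2 F ∇v`, the two Hessian terms `A F(∇v, z)` cancel by the symmetry of `F`, leaving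
`div V = y^(a-1) D (y Δv + a ∂_y v) - (n + a - 1)/2 · A G`.
The equation kills the first term, and `n + a - 1 = n - 2s` for `a = 1 - 2s`.
-/

section

variable {n : ℕ}

theorem clm_apply_eq_dotPt (L : Pt n →L[ℝ] ℝ) (d : Pt n) :
    L d = dotPt n d (fun k => L (eX n k), L (eY n)) := by
  have hd : d = ∑ k, d.1 k • eX n k + d.2 • eY n := by
    ext
    · simp [eX, eY, Prod.fst_sum, Finset.sum_apply, Pi.single_apply]
    · simp [eX, eY, Prod.snd_sum]
  conv_lhs => rw [hd]
  simp [dotPt, map_sum]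

theorem fderiv_apply_eq_dotPt_gradVec (f : Pt n → ℝ) (z d : Pt n) :
    fderiv ℝ f z d = dotPt n d (gradVec n f z) :=
  clm_apply_eq_dotPt _ _

theorem gradSq_eq_fderiv_gradVec (f : Pt n → ℝ) (z : Pt n) :
    gradSq n f z = fderiv ℝ f z (gradVec n f z) := by
  simp [fderiv_apply_eq_dotPt_gradVec, gradSq, dotPt, gradVec, sq]

theorem differentiableAt_fst_apply {W : Pt n → Pt n} {z : Pt n} (hW : DifferentiableAt ℝ W z)
    (k : Fin n) : DifferentiableAt ℝ (fun w => (W w).1 k) z :=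
  differentiableAt_pi.1 hW.fst k

theorem diverg_smul {f : Pt n → ℝ} {W : Pt n → Pt n} {z : Pt n}
    (hf : DifferentiableAt ℝ f z) (hW : DifferentiableAt ℝ W z) :
    diverg n (fun w => f w • W w) z = fderiv ℝ f z (W z) + f z * diverg n W z := by
  rw [clm_apply_eq_dotPt (fderiv ℝ f z) (W z)]
  simp only [diverg, dotPt, Prod.smul_fst, Prod.smul_snd, Pi.smul_apply, smul_eq_mul,
    fderiv_fun_mul hf (differentiableAt_fst_apply hW _), fderiv_fun_mul hf hW.snd]
  simp only [add_apply, smul_apply, smul_eq_mul, Finset.sum_add_distrib]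
  rw [mul_add, Finset.mul_sum]
  ring

theorem diverg_sub {V W : Pt n → Pt n} {z : Pt n}
    (hV : DifferentiableAt ℝ V z) (hW : DifferentiableAt ℝ W z) :
    diverg n (fun w => V w - W w) z = diverg n V z - diverg n W z := by
  simp only [diverg, Prod.fst_sub, Prod.snd_sub, Pi.sub_apply,
    fderiv_fun_sub (differentiableAt_fst_apply hV _) (differentiableAt_fst_apply hW _),
    fderiv_fun_sub hV.snd hW.snd,
    sub_apply, Finset.sum_sub_distrib]
  ring

theorem diverg_id (z : Pt n) : diverg n (fun w => w) z = n + 1 := by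
  have hfst : ∀ k, fderiv ℝ (fun w : Pt n => w.1 k) z =
      (ContinuousLinearMap.proj k).comp (ContinuousLinearMap.fst ℝ _ ℝ) := fun k =>
    ((ContinuousLinearMap.proj (R := ℝ) k).comp
      (ContinuousLinearMap.fst ℝ (Fin n → ℝ) ℝ)).hasFDerivAt.fderiv
  simp [diverg, eX, eY, hfst, fderiv_snd]

theorem diverg_gradVec (f : Pt n → ℝ) (z : Pt n) : diverg n (gradVec n f) z = lap n f z := rfl

section SecondDerivative

variable {v : Pt n → ℝ} {F : Pt n →L[ℝ] Pt n →L[ℝ] ℝ} {z : Pt n}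

theorem hasFDerivAt_pd (hF : HasFDerivAt (fderiv ℝ v) F z) (d : Pt n) :
    HasFDerivAt (pd n v d) (F.flip d) z :=
  (ContinuousLinearMap.apply ℝ ℝ d).hasFDerivAt.comp z hF

theorem differentiableAt_gradVec (hF : HasFDerivAt (fderiv ℝ v) F z) :
    DifferentiableAt ℝ (gradVec n v) z :=
  (differentiableAt_pi.2 fun k => (hasFDerivAt_pd hF (eX n k)).differentiableAt).prodMk
    (hasFDerivAt_pd hF (eY n)).differentiableAt

theorem hasFDerivAt_dotPt_gradVec (hF : HasFDerivAt (fderiv ℝ v) F z) :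
    HasFDerivAt (fun w => dotPt n w (gradVec n v w)) (fderiv ℝ v z + F.flip z) z := by
  simp only [← fderiv_apply_eq_dotPt_gradVec]
  exact (hF.clm_apply (hasFDerivAt_id z)).congr_fderiv
    (ContinuousLinearMap.ext fun _ => by simp)

theorem hasFDerivAt_gradSq (hF : HasFDerivAt (fderiv ℝ v) F z) :
    HasFDerivAt (gradSq n v) (2 • F.flip (gradVec n v z)) z := by
  have hsq : ∀ d, HasFDerivAt (fun w => pd n v d w ^ 2) ((2 * pd n v d z) • F.flip d) z :=
    fun d => by simpa using (hasFDerivAt_pd hF d).pow 2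
  refine ((HasFDerivAt.fun_sum (u := Finset.univ) fun k _ => hsq (eX n k)).add
    (hsq (eY n))).congr_fderiv ?_
  refine ContinuousLinearMap.ext fun e => ?_
  rw [smul_apply, ContinuousLinearMap.flip_apply, clm_apply_eq_dotPt (F e)]
  simp [dotPt, gradVec, Finset.mul_sum, mul_assoc]

end SecondDerivative

theorem diverg_pohozaev_field {v : Pt n → ℝ} {z : Pt n} (a : ℝ) (hv : ContDiffAt ℝ 2 v z)
    (hz : z.2 ≠ 0) :
    diverg n (fun w =>
        (w.2 ^ a * dotPt n w (gradVec n v w)) • gradVec n v w -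
          ((1 / 2) * w.2 ^ a * gradSq n v w) • w) z =
      z.2 ^ (a - 1) * dotPt n z (gradVec n v z) * (z.2 * lap n v z + a * pd n v (eY n) z) -
        ((n + a - 1) / 2) * z.2 ^ a * gradSq n v z := by
  set F := fderiv ℝ (fderiv ℝ v) z
  have hF : HasFDerivAt (fderiv ℝ v) F z :=
    ((hv.fderiv_right (m := 1) le_rfl).differentiableAt one_ne_zero).hasFDerivAt
  have hsym : ∀ d e, F d e = F e d := hv.isSymmSndFDerivAt (by simp)
  have hA : HasFDerivAt (fun w : Pt n => w.2 ^ a)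
      ((a * z.2 ^ (a - 1)) • ContinuousLinearMap.snd ℝ (Fin n → ℝ) ℝ) z :=
    hasFDerivAt_snd.rpow_const (Or.inl hz)
  have hAD := hA.fun_mul (hasFDerivAt_dotPt_gradVec hF)
  have hAG := (hA.const_mul (1 / 2)).fun_mul (hasFDerivAt_gradSq hF)
  have hgrad := differentiableAt_gradVec hF
  rw [diverg_sub (hAD.differentiableAt.fun_smul hgrad)
      (hAG.differentiableAt.fun_smul differentiableAt_fun_id),
    diverg_smul hAD.differentiableAt hgrad,
    diverg_smul hAG.differentiableAt differentiableAt_fun_id,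
    diverg_gradVec, diverg_id, hAD.fderiv, hAG.fderiv]
  simp only [add_apply, smul_apply, ContinuousLinearMap.flip_apply, smul_eq_mul, nsmul_eq_mul,
    ContinuousLinearMap.coe_snd', Nat.cast_ofNat]
  rw [← gradSq_eq_fderiv_gradVec, hsym (gradVec n v z) z, rpow_sub_one hz]
  simp only [gradVec]
  field_simp
  ring

end

theorem isOpen_upperHalf (n : ℕ) : IsOpen (upperHalf n) :=
  isOpen_lt continuous_const continuous_snd

theorem stmt17_general (n : ℕ) (s : ℝ)
    (v : Pt n → ℝ) (hv : ContDiffOn ℝ 2 v (upperHalf n))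
    (heq : ∀ z : Pt n, 0 < z.2 →
      z.2 * lap n v z + (1 - 2 * s) * pd n v (eY n) z = 0) :
    ∀ z : Pt n, 0 < z.2 →
      diverg n (fun w =>
          (w.2 ^ (1 - 2 * s) * dotPt n w (gradVec n v w)) • gradVec n v w -
            ((1 / 2) * w.2 ^ (1 - 2 * s) * gradSq n v w) • w) z +
        (((n : ℝ) - 2 * s) / 2) * z.2 ^ (1 - 2 * s) * gradSq n v z = 0 := by
  intro z hz
  have hvz : ContDiffAt ℝ 2 v z := hv.contDiffAt ((isOpen_upperHalf n).mem_nhds hz)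
  rw [diverg_pohozaev_field (1 - 2 * s) hvz hz.ne', heq z hz]
  ring

/-- pointwise Pohozaev-type divergence identity for solutions of the
degenerate equation `div(y^a ∇v) = 0`. -/
theorem stmt17 (n : ℕ) (hn : 1 ≤ n) (s : ℝ) (hs : s ∈ Set.Ioo (0 : ℝ) 1)
    (v : Pt n → ℝ) (hv : ContDiffOn ℝ 2 v (upperHalf n))
    (heq : ∀ z : Pt n, 0 < z.2 →
      z.2 * lap n v z + (1 - 2 * s) * pd n v (eY n) z = 0) :
    ∀ z : Pt n, 0 < z.2 →
      diverg n (fun w =>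
          (w.2 ^ (1 - 2 * s) * dotPt n w (gradVec n v w)) • gradVec n v w -
            ((1 / 2) * w.2 ^ (1 - 2 * s) * gradSq n v w) • w) z +
        (((n : ℝ) - 2 * s) / 2) * z.2 ^ (1 - 2 * s) * gradSq n v z = 0 :=
  stmt17_general n s v hv heq
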